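/- Let ρ : S → ℝ≥0 ∪ {∞} be a function on a class of objects, and suppose for every short exact sequence 0 → E → F → G → 0 one has max{ρ(E), ρ(G)} ≤ ρ(F) ≤ ρ(E) + ρ(G). Given a six-term-type long exact sequence ⋯ → G_{l−1} → E_l → F_l → G_l → E_{l+1} → ⋯ of such objects, and setting ρ(E•) = max_l ρ(E_l) etc. (finitely many nonzero terms), one obtains |ρ(E•) − ρ(G•)| ≤ ρ(F•) ≤ ρ(E•) + ρ(G•). -/
import Mathlib


/-!
Statement 6 (abstract form of Proposition 4.7): an invariant `ρ` with values in
`[0,∞]` on an abelian category which is an isomorphism invariant, vanishes on zero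
objects, and satisfies `max{ρE, ρG} ≤ ρF ≤ ρE + ρG` for every short exact sequence
`0 → E → F → G → 0`, satisfies `|ρ(E•) − ρ(G•)| ≤ ρ(F•) ≤ ρ(E•) + ρ(G•)` for any
long exact sequence `⋯ → G_{l−1} → E_l → F_l → G_l → E_{l+1} → ⋯` with finitely
many nonzero terms, where `ρ(E•) = sup_l ρ(E_l)` etc.  The inequality
`|ρ(E•) − ρ(G•)| ≤ ρ(F•)` is phrased as the pair of additive inequalities.
-/

open CategoryTheory CategoryTheory.Limits

open scoped ENNReal

section Aux

variable {C : Type*} [Category C] [Abelian C]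

/-- An epimorphism `p : A ⟶ K` gives a short exact sequence `0 → ker p → A → K → 0`. -/
lemma aux_ses_of_epi {A K : C} (p : A ⟶ K) [Epi p] :
    (ShortComplex.mk (kernel.ι p) p (kernel.condition p)).ShortExact :=
  ShortComplex.ShortExact.mk'
    (ShortComplex.exact_of_f_is_kernel _ (kernelIsKernel p)) inferInstance inferInstance

/-- A monomorphism `i : K ⟶ X` gives a short exact sequence `0 → K → X → coker i → 0`. -/
lemma aux_ses_of_mono {K X : C} (i : K ⟶ X) [Mono i] :
    (ShortComplex.mk i (cokernel.π i) (cokernel.condition i)).ShortExact :=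
  ShortComplex.ShortExact.mk'
    (ShortComplex.exact_of_g_is_cokernel _ (cokernelIsCokernel i)) inferInstance inferInstance

/-- Any morphism `g : B ⟶ X` gives a short exact sequence `0 → ker g → B → im g → 0`. -/
lemma aux_ses_ker_im {B X : C} (g : B ⟶ X) :
    (ShortComplex.mk (kernel.ι g) (Abelian.factorThruImage g)
      (by rw [← cancel_mono (Abelian.image.ι g), Category.assoc,
              Abelian.image.fac, kernel.condition, zero_comp])).ShortExact := by
  refine ShortComplex.ShortExact.mk' ?_ inferInstance inferInstance
  apply ShortComplex.exact_of_f_is_kernel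
  exact KernelFork.IsLimit.ofι _ _
    (fun s hs => kernel.lift g s (by rw [← Abelian.image.fac g, ← Category.assoc, hs, zero_comp]))
    (fun s hs => by simp)
    (fun s hs m hm => by rw [← cancel_mono (kernel.ι g), hm]; simp)

/-- For an exact pair `A → B → X`, the invariant of the middle term is bounded by the
sum of the invariants of the outer terms. -/
lemma aux_rho_mid (ρ : C → ℝ≥0∞)
    (hses : ∀ S : ShortComplex C, S.ShortExact →
      max (ρ S.X₁) (ρ S.X₃) ≤ ρ S.X₂ ∧ ρ S.X₂ ≤ ρ S.X₁ + ρ S.X₃)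
    {A B X : C} (f : A ⟶ B) (g : B ⟶ X) (w : f ≫ g = 0)
    (hex : (ShortComplex.mk f g w).Exact) : ρ B ≤ ρ A + ρ X := by
  have h3 := (hses _ (aux_ses_ker_im g)).2
  have hker : ρ (kernel g) ≤ ρ A := by
    have hepi : Epi (kernel.lift g f w) :=
      (ShortComplex.exact_iff_epi_kernel_lift _).1 hex
    exact le_trans (le_max_right _ _) (hses _ (aux_ses_of_epi (kernel.lift g f w))).1
  have him : ρ (Abelian.image g) ≤ ρ X :=
    le_trans (le_max_left _ _) (hses _ (aux_ses_of_mono (Abelian.image.ι g))).1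
  exact le_trans h3 (add_le_add hker him)

end Aux

theorem rho_long_exact_estimate
    {C : Type*} [Category C] [Abelian C] (ρ : C → ℝ≥0∞)
    (hiso : ∀ {X Y : C}, (X ≅ Y) → ρ X = ρ Y)
    (hzero : ∀ X : C, IsZero X → ρ X = 0)
    (hses : ∀ S : ShortComplex C, S.ShortExact →
      max (ρ S.X₁) (ρ S.X₃) ≤ ρ S.X₂ ∧ ρ S.X₂ ≤ ρ S.X₁ + ρ S.X₃)
    (E F G : ℤ → C)
    (α : ∀ l, E l ⟶ F l) (β : ∀ l, F l ⟶ G l) (γ : ∀ l, G l ⟶ E (l + 1))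
    (w₁ : ∀ l, α l ≫ β l = 0) (w₂ : ∀ l, β l ≫ γ l = 0)
    (w₃ : ∀ l, γ l ≫ α (l + 1) = 0)
    (h₁ : ∀ l, (ShortComplex.mk (α l) (β l) (w₁ l)).Exact)
    (h₂ : ∀ l, (ShortComplex.mk (β l) (γ l) (w₂ l)).Exact)
    (h₃ : ∀ l, (ShortComplex.mk (γ l) (α (l + 1)) (w₃ l)).Exact)
    (hfin : ∃ N : ℕ, ∀ l : ℤ, (N : ℤ) ≤ |l| →
      IsZero (E l) ∧ IsZero (F l) ∧ IsZero (G l)) :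
    (⨆ l, ρ (F l)) ≤ (⨆ l, ρ (E l)) + (⨆ l, ρ (G l)) ∧
    (⨆ l, ρ (E l)) ≤ (⨆ l, ρ (F l)) + (⨆ l, ρ (G l)) ∧
    (⨆ l, ρ (G l)) ≤ (⨆ l, ρ (F l)) + (⨆ l, ρ (E l)) := by
  refine ⟨?_, ?_, ?_⟩
  · refine iSup_le fun l => ?_
    have := aux_rho_mid ρ hses (α l) (β l) (w₁ l) (h₁ l)
    exact le_trans this (add_le_add (le_iSup (fun l => ρ (E l)) l)
      (le_iSup (fun l => ρ (G l)) l))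
  · refine iSup_le fun l => ?_
    have key := aux_rho_mid ρ hses (γ (l - 1)) (α (l - 1 + 1)) (w₃ (l - 1)) (h₃ (l - 1))
    have hl : l - 1 + 1 = l := by omega
    rw [hl] at key
    refine le_trans key ?_
    rw [add_comm]
    exact add_le_add (le_iSup (fun l => ρ (F l)) l)
      (le_iSup (fun l => ρ (G l)) (l - 1))
  · refine iSup_le fun l => ?_
    have := aux_rho_mid ρ hses (β l) (γ l) (w₂ l) (h₂ l)
    exact le_trans this (add_le_add (le_iSup (fun l => ρ (F l)) l)
      (le_iSup (fun l => ρ (E l)) (l + 1)))
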